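/- Let 0 < q < 1, ā < 0, b̄ > 0, and let α ∈ ℝ satisfy ā + b̄ q^α = 0. If p : [0,∞) → [0,∞) is continuous with 0 < p(0) and satisfies the differential inequality D⁺p(t) ≤ ā p(t) + b̄ p(qt) for all t ≥ 0 (D⁺ the upper Dini derivative), then there exists a constant C > 0 such that p(t) ≤ C p(0) t^α for all t ≥ 1. -/

import Mathlib

open Filter

/-- Upper (right) Dini derivative: `D⁺h(t) = limsup_{δ→0⁺} (h(t+δ)-h(t))/δ`. -/
noncomputable def DiniUpper (h : ℝ → ℝ) (t : ℝ) : ℝ :=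
  Filter.limsup (fun δ => (h (t + δ) - h t) / δ) (nhdsWithin 0 (Set.Ioi 0))

/-!
Since `abar + bbar * q ^ α = 0`, the power `t ^ α` solves the pantograph equation exactly, and
subtracting the lower-order term `lam * t ^ (α - 1)` makes `B t = t ^ α - lam * t ^ (α - 1)` a strict
supersolution for large `t`. At a first contact point `c ≥ T₀ / q` of `p` with `K * B`, the delayed
value `p (q c)` is still below `K * B (q c)`, so `D⁺p(c) < (K * B)'(c)` and `p` cannot cross `K * B`.
Choosing `K` with `p ≤ K * B` on the initial window `[T₀, T₀ / q]` thus gives `p ≤ K * B ≤ K t ^ α`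
beyond `T₀`, and compactness handles `[1, T₀]`.
-/

open Set Topology

/- `DiniUpper` is the junk value `0` when the right slopes are unbounded above, so an upper bound
on it only controls the slopes when it is nonzero. -/
theorem eventually_slope_lt_of_diniUpper_lt {h : ℝ → ℝ} {x r : ℝ} (hr : DiniUpper h x < r)
    (h0 : DiniUpper h x ≠ 0) : ∀ᶠ y in 𝓝[>] x, slope h x y < r := by
  have hbdd : (𝓝[>] (0 : ℝ)).IsBoundedUnder (· ≤ ·) fun δ => (h (x + δ) - h x) / δ := by
    by_contra hnot
    exact h0 (Real.limsup_of_not_isBoundedUnder hnot)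
  have hshift : Tendsto (fun y => y - x) (𝓝[>] x) (𝓝[>] 0) := by
    refine tendsto_nhdsWithin_of_tendsto_nhds_of_eventually_within _ ?_ ?_
    · simpa using ((continuous_sub_right x).tendsto x).mono_left nhdsWithin_le_nhds
    · filter_upwards [self_mem_nhdsWithin] with y (hy : x < y) using sub_pos.2 hy
  filter_upwards [hshift.eventually (eventually_lt_of_limsup_lt hr hbdd)] with y hy
  rwa [add_sub_cancel, ← slope_def_field] at hy

theorem eventually_lt_of_diniUpper_lt_of_hasDerivWithinAt {p B : ℝ → ℝ} {x B' : ℝ}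
    (hx : p x = B x) (hB : HasDerivWithinAt B B' (Ici x) x) (hlt : DiniUpper p x < B')
    (h0 : DiniUpper p x ≠ 0) : ∀ᶠ y in 𝓝[>] x, p y < B y := by
  obtain ⟨r, hpr, hrB⟩ := exists_between hlt
  have hslopeB : ∀ᶠ y in 𝓝[>] x, r < slope B x y :=
    (hasDerivWithinAt_iff_tendsto_slope' self_notMem_Ioi).1 hB.Ioi_of_Ici |>.eventually
      (eventually_gt_nhds hrB)
  filter_upwards [eventually_slope_lt_of_diniUpper_lt hpr h0, hslopeB, self_mem_nhdsWithin]
    with y hpy hBy hy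
  have hslope := hpy.trans hBy
  rwa [slope_def_field, slope_def_field, div_lt_div_iff_of_pos_right (sub_pos.2 hy), hx,
    sub_lt_sub_iff_right] at hslope

theorem le_on_Icc_of_eventually_le_of_touching {p B : ℝ → ℝ} {a b : ℝ}
    (hp : ContinuousOn p (Icc a b)) (hB : ContinuousOn B (Icc a b)) (ha : p a ≤ B a)
    (htouch : ∀ x ∈ Ico a b, (∀ y ∈ Icc a x, p y ≤ B y) → p x = B x →
      ∀ᶠ y in 𝓝[>] x, p y ≤ B y) :
    ∀ x ∈ Icc a b, p x ≤ B x := by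
  have hpB : ContinuousOn (fun x => (p x, B x)) (Icc a b) := hp.prodMk hB
  have hclosed : IsClosed ({x | p x ≤ B x} ∩ Icc a b) := by
    rw [inter_comm]
    exact hpB.preimage_isClosed_of_isClosed isClosed_Icc OrderClosedTopology.isClosed_le'
  refine hclosed.Icc_subset_of_forall_mem_nhdsGT_of_Icc_subset ha fun x hx hle => ?_
  have hx' : p x ≤ B x := hle ⟨hx.1, le_rfl⟩
  rcases hx'.lt_or_eq with hlt | heq
  · have hev : ∀ᶠ y in 𝓝[Icc a b] x, p y < B y :=
      hpB x (Ico_subset_Icc_self hx) (IsOpen.mem_nhds (isOpen_lt continuous_fst continuous_snd) hlt)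
    have hev' : ∀ᶠ y in 𝓝[>] x, p y < B y := nhdsWithin_le_of_mem (Icc_mem_nhdsGT_of_mem hx) hev
    exact hev'.mono fun y => le_of_lt
  · exact htouch x hx hle heq

theorem exists_pos_le_mul_on_Icc {f g : ℝ → ℝ} {a b : ℝ} (hf : ContinuousOn f (Icc a b))
    (hg : ContinuousOn g (Icc a b)) (hg0 : ∀ t ∈ Icc a b, 0 < g t) :
    ∃ C > 0, ∀ t ∈ Icc a b, f t ≤ C * g t := by
  obtain ⟨M, hM⟩ := isCompact_Icc.bddAbove_image (hf.div hg fun t ht => (hg0 t ht).ne')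
  refine ⟨max M 1, by positivity, fun t ht => ?_⟩
  calc f t = f t / g t * g t := (div_mul_cancel₀ _ (hg0 t ht).ne').symm
    _ ≤ max M 1 * g t := by
      gcongr
      · exact (hg0 t ht).le
      · exact (hM ⟨t, ht, rfl⟩).trans (le_max_left _ _)

theorem exists_pos_forall_ge_le_mul {f g : ℝ → ℝ} {a b K : ℝ} (hf : ContinuousOn f (Icc a b))
    (hg : ContinuousOn g (Icc a b)) (hg0 : ∀ t ≥ a, 0 < g t) (hK : ∀ t ≥ b, f t ≤ K * g t) :
    ∃ C > 0, ∀ t ≥ a, f t ≤ C * g t := by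
  obtain ⟨C, hC, hCle⟩ := exists_pos_le_mul_on_Icc hf hg fun t ht => hg0 t ht.1
  refine ⟨max K C, lt_max_of_lt_right hC, fun t ht => ?_⟩
  rcases le_total t b with htb | htb
  · exact (hCle t ⟨ht, htb⟩).trans (by gcongr; exacts [(hg0 t ht).le, le_max_right _ _])
  · exact (hK t htb).trans (by gcongr; exacts [(hg0 t ht).le, le_max_left _ _])

noncomputable def pantographBarrier (α lam t : ℝ) : ℝ := t ^ α - lam * t ^ (α - 1)

section PantographBarrier

variable {α lam t : ℝ}

theorem pantographBarrier_eq_mul (ht : 0 < t) :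
    pantographBarrier α lam t = t ^ (α - 1) * (t - lam) := by
  rw [pantographBarrier, mul_sub, ← Real.rpow_add_one ht.ne', sub_add_cancel, mul_comm]

theorem pantographBarrier_pos (ht : 0 < t) (hlam : lam < t) : 0 < pantographBarrier α lam t := by
  rw [pantographBarrier_eq_mul ht]
  exact mul_pos (Real.rpow_pos_of_pos ht _) (sub_pos.2 hlam)

theorem pantographBarrier_le_rpow (ht : 0 < t) (hlam : 0 ≤ lam) :
    pantographBarrier α lam t ≤ t ^ α := by
  have := Real.rpow_pos_of_pos ht (α - 1)
  rw [pantographBarrier]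
  nlinarith

theorem continuousOn_pantographBarrier : ContinuousOn (pantographBarrier α lam) (Ioi 0) :=
  fun _ ht => ((Real.continuousAt_rpow_const _ _ (Or.inl (ne_of_gt ht))).sub
    ((Real.continuousAt_rpow_const _ _ (Or.inl (ne_of_gt ht))).const_mul lam)).continuousWithinAt

theorem hasDerivAt_pantographBarrier (ht : 0 < t) :
    HasDerivAt (pantographBarrier α lam)
      (α * t ^ (α - 1) - lam * ((α - 1) * t ^ (α - 1 - 1))) t :=
  (Real.hasDerivAt_rpow_const (Or.inl ht.ne')).sub
    ((Real.hasDerivAt_rpow_const (Or.inl ht.ne')).const_mul lam)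

theorem pantographBarrier_delay {q abar bbar : ℝ} (hq : 0 < q) (hα : abar + bbar * q ^ α = 0)
    (ht : 0 < t) :
    abar * pantographBarrier α lam t + bbar * pantographBarrier α lam (q * t) =
      -(lam * (abar + bbar * q ^ (α - 1)) * t ^ (α - 1)) := by
  have hαt : abar * t ^ α + bbar * (q * t) ^ α = 0 := by
    rw [Real.mul_rpow hq.le ht.le]; linear_combination t ^ α * hα
  simp only [pantographBarrier]
  rw [Real.mul_rpow hq.le ht.le (z := α - 1)]
  linear_combination hαt

theorem neg_mul_rpow_lt_deriv_pantographBarrier {m : ℝ} (ht : 0 < t) (hm : 1 ≤ α + m)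
    (hlam : lam * (α - 1) < t) :
    -(m * t ^ (α - 1)) < α * t ^ (α - 1) - lam * ((α - 1) * t ^ (α - 1 - 1)) := by
  have hu := Real.rpow_pos_of_pos ht (α - 1 - 1)
  have hsplit : t ^ (α - 1) = t ^ (α - 1 - 1) * t := by
    rw [← Real.rpow_add_one ht.ne', sub_add_cancel]
  rw [hsplit]
  nlinarith [mul_le_mul_of_nonneg_right hm ht.le]

end PantographBarrier

theorem pantograph_coeff_pos {q abar bbar α : ℝ} (hq0 : 0 < q) (hq1 : q < 1) (hb : 0 < bbar)
    (hα : abar + bbar * q ^ α = 0) : 0 < abar + bbar * q ^ (α - 1) := by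
  have hqα : q ^ α = q ^ (α - 1) * q := by rw [← Real.rpow_add_one hq0.ne', sub_add_cancel]
  have : 0 < bbar * q ^ (α - 1) * (1 - q) :=
    mul_pos (mul_pos hb (Real.rpow_pos_of_pos hq0 _)) (sub_pos.2 hq1)
  linear_combination this - hα + bbar * hqα

theorem le_mul_pantographBarrier_of_diniUpper_le {q abar bbar α lam T₀ K : ℝ} {p : ℝ → ℝ}
    (hq0 : 0 < q) (hq1 : q < 1) (hb : 0 < bbar) (hα : abar + bbar * q ^ α = 0)
    (hlam0 : 0 < lam) (hlam : 1 ≤ α + lam * (abar + bbar * q ^ (α - 1)))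
    (hT₀0 : 0 < T₀) (hT₀ : lam * (α - 1) < T₀) (hK : 0 < K)
    (hp : ContinuousOn p (Ici T₀))
    (hD : ∀ t ≥ T₀, DiniUpper p t ≤ abar * p t + bbar * p (q * t))
    (hbase : ∀ t ∈ Icc T₀ (T₀ / q), p t ≤ K * pantographBarrier α lam t) :
    ∀ t ≥ T₀, p t ≤ K * pantographBarrier α lam t := by
  set B := pantographBarrier α lam
  set m := lam * (abar + bbar * q ^ (α - 1))
  have hm : 0 < m := mul_pos hlam0 (pantograph_coeff_pos hq0 hq1 hb hα)
  have hT₀q : T₀ ≤ T₀ / q := (le_div_iff₀ hq0).2 (by nlinarith)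
  intro t ht
  refine le_on_Icc_of_eventually_le_of_touching (B := fun y => K * B y)
    (hp.mono Icc_subset_Ici_self)
    (continuousOn_const.mul (continuousOn_pantographBarrier.mono fun y hy => hT₀0.trans_le hy.1))
    (hbase T₀ ⟨le_rfl, hT₀q⟩) ?_ t ⟨ht, le_rfl⟩
  intro x hx hhist hxB
  rcases lt_or_ge x (T₀ / q) with hxT | hxT
  · filter_upwards [Ioo_mem_nhdsGT hxT] with y hy using hbase y ⟨hx.1.trans hy.1.le, hy.2.le⟩
  have hx0 : 0 < x := hT₀0.trans_le hx.1
  have hqx : T₀ ≤ q * x := (div_le_iff₀' hq0).1 hxT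
  have hDx : DiniUpper p x ≤ K * -(m * x ^ (α - 1)) :=
    calc DiniUpper p x ≤ abar * p x + bbar * p (q * x) := hD x hx.1
      _ ≤ abar * (K * B x) + bbar * (K * B (q * x)) := by
        rw [hxB]; gcongr; exact hhist _ ⟨hqx, by nlinarith⟩
      _ = K * -(m * x ^ (α - 1)) := by
        rw [← pantographBarrier_delay hq0 hα hx0]; ring
  have hneg : K * -(m * x ^ (α - 1)) < 0 :=
    mul_neg_of_pos_of_neg hK (neg_neg_of_pos (mul_pos hm (Real.rpow_pos_of_pos hx0 _)))
  refine (eventually_lt_of_diniUpper_lt_of_hasDerivWithinAt hxB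
    ((hasDerivAt_pantographBarrier hx0).const_mul K).hasDerivWithinAt ?_
    (hDx.trans_lt hneg).ne).mono fun y => le_of_lt
  exact hDx.trans_lt (mul_lt_mul_of_pos_left
    (neg_mul_rpow_lt_deriv_pantographBarrier hx0 hlam (hT₀.trans_le hx.1)) hK)

theorem stmt2_general (q abar bbar α : ℝ) (hq0 : 0 < q) (hq1 : q < 1)
    (hb : 0 < bbar) (hα : abar + bbar * q ^ α = 0)
    (p : ℝ → ℝ) (hp_cont : ContinuousOn p (Set.Ici 0))
    (hp0 : 0 < p 0)
    (hD : ∀ t ≥ (0:ℝ), DiniUpper p t ≤ abar * p t + bbar * p (q * t)) :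
    ∃ C > (0:ℝ), ∀ t ≥ (1:ℝ), p t ≤ C * p 0 * t ^ α := by
  have hc₁ := pantograph_coeff_pos hq0 hq1 hb hα
  set lam := (1 + |α|) / (abar + bbar * q ^ (α - 1))
  set T₀ := 1 + lam * (1 + |α|)
  have hlam0 : 0 < lam := div_pos (by positivity) hc₁
  have hlam : lam * (abar + bbar * q ^ (α - 1)) = 1 + |α| := div_mul_cancel₀ _ hc₁.ne'
  obtain ⟨hlamT₀, hT₀, hT₀1⟩ : lam < T₀ ∧ lam * (α - 1) < T₀ ∧ 1 ≤ T₀ := by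
    refine ⟨?_, ?_, ?_⟩ <;> nlinarith [abs_nonneg α, le_abs_self α]
  have hpT₀ : ContinuousOn p (Ici T₀) :=
    hp_cont.mono fun t ht => show (0 : ℝ) ≤ t by linarith [mem_Ici.1 ht]
  obtain ⟨K, hK, hbase⟩ := exists_pos_le_mul_on_Icc (b := T₀ / q) (hpT₀.mono Icc_subset_Ici_self)
    (continuousOn_pantographBarrier.mono fun t ht => hlam0.trans (hlamT₀.trans_le ht.1))
    fun t ht => pantographBarrier_pos (hlam0.trans (hlamT₀.trans_le ht.1)) (hlamT₀.trans_le ht.1)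
  have hcomp := le_mul_pantographBarrier_of_diniUpper_le hq0 hq1 hb hα hlam0
    (by rw [hlam]; linarith [neg_abs_le α]) (by linarith) hT₀ hK hpT₀
    (fun t ht => hD t (by linarith)) hbase
  obtain ⟨C, hC, hCle⟩ := exists_pos_forall_ge_le_mul (g := fun t => t ^ α) (a := 1) (b := T₀)
    (hp_cont.mono fun t ht => show (0 : ℝ) ≤ t by linarith [ht.1])
    (fun t ht => (Real.continuousAt_rpow_const _ _ (Or.inl (by linarith [ht.1]))).continuousWithinAt)
    (fun t ht => Real.rpow_pos_of_pos (by linarith) _)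
    fun t ht => (hcomp t ht).trans (by
      gcongr; exact pantographBarrier_le_rpow (by linarith) hlam0.le)
  refine ⟨C / p 0, div_pos hC hp0, fun t ht => ?_⟩
  rw [div_mul_cancel₀ _ hp0.ne']
  exact hCle t ht

theorem stmt2 (q abar bbar α : ℝ) (hq0 : 0 < q) (hq1 : q < 1)
    (ha : abar < 0) (hb : 0 < bbar) (hα : abar + bbar * q ^ α = 0)
    (p : ℝ → ℝ) (hp_cont : ContinuousOn p (Set.Ici 0))
    (hp_nonneg : ∀ t ≥ (0:ℝ), 0 ≤ p t) (hp0 : 0 < p 0)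
    (hD : ∀ t ≥ (0:ℝ), DiniUpper p t ≤ abar * p t + bbar * p (q * t)) :
    ∃ C > (0:ℝ), ∀ t ≥ (1:ℝ), p t ≤ C * p 0 * t ^ α :=
  stmt2_general q abar bbar α hq0 hq1 hb hα p hp_cont hp0 hD
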